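/- arXiv:2205.09668 — 2 statements merged into one kernel-verified Lean document; each statement's English description precedes it below -/
import Mathlib

section
/- Let V be a finite nonempty type and let P be an X-set property on finite subsets of V. If there exists a graph automorphism φ of the P-TAR graph such that φ(V) ≠ V (i.e., φ does not fix the vertex given by the full set V), then the P-TAR graph has a perfect matching. -/
/-- The TAR (token addition/removal) graph of a predicate `P` on finite subsets of `V`:
vertices are the `P`-sets, two `P`-sets being adjacent iff their symmetric difference
has exactly one element. -/
def tarGraph {V : Type*} [DecidableEq V] (P : Finset V → Prop) :
    SimpleGraph {S : Finset V // P S} where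
  Adj S T := (symmDiff S.1 T.1).card = 1
  symm := ⟨fun S T (h : (symmDiff S.1 T.1).card = 1) =>
    show (symmDiff T.1 S.1).card = 1 by rwa [symmDiff_comm]⟩
  loopless := ⟨fun S (h : (symmDiff S.1 S.1).card = 1) => by simp [symmDiff_self] at h⟩

/-- `S` is a minimal `P`-set: `S` is a `P`-set and no proper subset of `S` is a `P`-set. -/
def IsMinimalPSet {V : Type*} (P : Finset V → Prop) (S : Finset V) : Prop :=
  P S ∧ ∀ T : Finset V, T ⊂ S → ¬ P T

/-- `R` is `P`-irrelevant: no minimal `P`-set contains any vertex of `R`. -/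
def IsIrrelevant {V : Type*} (P : Finset V → Prop) (R : Finset V) : Prop :=
  ∀ S : Finset V, IsMinimalPSet P S → ∀ v ∈ R, v ∉ S

/-!
Since `P` is upward closed, any two `P`-sets are joined by a path of length equal to their
Hamming distance, so TAR-graph distance is Hamming distance and every automorphism `φ` is a
Hamming isometry. Comparing distances to `V` and to the sets `V \ {v}` shows that
`φ S = U ∆ g (V \ S)` for `U = φ V` and some permutation `g` of `V`. Pulling back `U ∩ T` along
this formula gives a superset of `φ⁻¹ T`, so `U ∩ T` is a `P`-set whenever `T` is. For `r ∉ U`,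
`T ∆ {r} ⊇ U ∩ T` is then a `P`-set, and toggling `r` is a perfect matching.
-/

open Finset Function
open scoped symmDiff

namespace Finset

variable {α : Type*} [DecidableEq α]

lemma symmDiff_singleton_of_mem {s : Finset α} {a : α} (h : a ∈ s) : s ∆ {a} = s.erase a := by
  ext x
  by_cases hx : x = a <;> simp [mem_symmDiff, hx, h]

lemma symmDiff_singleton_of_notMem {s : Finset α} {a : α} (h : a ∉ s) :
    s ∆ {a} = insert a s := by
  ext x
  by_cases hx : x = a <;> simp [mem_symmDiff, hx, h]

lemma mem_iff_mem_of_card_symmDiff_singleton_eq {s t : Finset α} {a b : α}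
    (hcard : #s = #t) (h : #(s ∆ {a}) = #(t ∆ {b})) : a ∈ s ↔ b ∈ t := by
  by_cases ha : a ∈ s <;> by_cases hb : b ∈ t <;>
    simp only [ha, hb, symmDiff_singleton_of_mem, symmDiff_singleton_of_notMem, not_false_eq_true,
      card_insert_of_notMem, card_erase_of_mem] at h ⊢ <;>
    omega

lemma inter_subset_symmDiff_singleton {s t : Finset α} {a : α} (ha : a ∉ s) :
    s ∩ t ⊆ t ∆ {a} := fun x hx =>
  mem_symmDiff.mpr <| .inl ⟨(mem_inter.mp hx).2, by
    intro hxa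
    exact ha (mem_singleton.mp hxa ▸ (mem_inter.mp hx).1)⟩

end Finset

lemma SimpleGraph.exists_isPerfectMatching_of_involutive {V : Type*} {G : SimpleGraph V}
    {f : V → V} (hf : Involutive f) (hadj : ∀ v, G.Adj v (f v)) :
    ∃ M : G.Subgraph, M.IsPerfectMatching :=
  ⟨{ verts := Set.univ
     Adj v w := f v = w
     adj_sub := by rintro v _ rfl; exact hadj v
     edge_vert _ := trivial
     symm := ⟨fun v w h => h ▸ hf v⟩ },
    SimpleGraph.Subgraph.isPerfectMatching_iff.mpr fun v => ⟨f v, rfl, fun _ => Eq.symm⟩⟩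

namespace tarGraph

variable {V W : Type*} [DecidableEq V] [DecidableEq W] {P : Finset V → Prop} {Q : Finset W → Prop}

lemma adj_iff {S T : {S : Finset V // P S}} : (tarGraph P).Adj S T ↔ #(S.1 ∆ T.1) = 1 :=
  Iff.rfl

lemma card_symmDiff_le_length {S T : {S : Finset V // P S}} (p : (tarGraph P).Walk S T) :
    #(S.1 ∆ T.1) ≤ p.length := by
  induction p with
  | nil => simp
  | @cons S U T hadj p ih =>
    calc #(S.1 ∆ T.1) ≤ #(S.1 ∆ U.1 ∪ U.1 ∆ T.1) := card_le_card (symmDiff_triangle _ _ _)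
      _ ≤ #(S.1 ∆ U.1) + #(U.1 ∆ T.1) := card_union_le _ _
      _ ≤ (p.cons hadj).length := by rw [SimpleGraph.Walk.length_cons, adj_iff.mp hadj]; omega

lemma exists_symmDiff_singleton_of_ne (hP : Monotone P) {S T : Finset V} (hS : P S) (hT : P T)
    (hST : S ≠ T) : ∃ x ∈ S ∆ T, P (S ∆ {x}) := by
  by_cases hTS : T ⊆ S
  · obtain ⟨x, hxS, hxT⟩ := exists_of_ssubset (ssubset_of_subset_of_ne hTS hST.symm)
    refine ⟨x, mem_symmDiff.mpr (Or.inl ⟨hxS, hxT⟩), hP ?_ hT⟩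
    rw [symmDiff_singleton_of_mem hxS]
    exact fun y hy => mem_erase.mpr ⟨by rintro rfl; exact hxT hy, hTS hy⟩
  · obtain ⟨x, hxT, hxS⟩ := not_subset.mp hTS
    refine ⟨x, mem_symmDiff.mpr (Or.inr ⟨hxT, hxS⟩), hP ?_ hS⟩
    rw [symmDiff_singleton_of_notMem hxS]
    exact subset_insert _ _

lemma exists_walk_length_eq_card_symmDiff (hP : Monotone P) (S T : {S : Finset V // P S}) :
    ∃ p : (tarGraph P).Walk S T, p.length = #(S.1 ∆ T.1) := by
  induction hn : #(S.1 ∆ T.1) generalizing S with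
  | zero =>
    obtain rfl : S = T := Subtype.ext (symmDiff_eq_bot.mp (card_eq_zero.mp hn))
    exact ⟨.nil, rfl⟩
  | succ n ih =>
    have hST : S.1 ≠ T.1 := by rintro h; simp [h] at hn
    obtain ⟨x, hx, hPx⟩ := exists_symmDiff_singleton_of_ne hP S.2 T.2 hST
    have hadj : (tarGraph P).Adj S ⟨S.1 ∆ {x}, hPx⟩ := by
      simp [adj_iff, symmDiff_symmDiff_cancel_left]
    have hdist : #((S.1 ∆ {x}) ∆ T.1) = n := by
      rw [symmDiff_right_comm, symmDiff_singleton_of_mem hx, card_erase_of_mem hx, hn]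
      rfl
    obtain ⟨p, hp⟩ := ih ⟨S.1 ∆ {x}, hPx⟩ hdist
    exact ⟨p.cons hadj, by simp [hp]⟩

lemma card_symmDiff_map_le (hP : Monotone P) (f : tarGraph P →g tarGraph Q)
    (S T : {S : Finset V // P S}) : #((f S).1 ∆ (f T).1) ≤ #(S.1 ∆ T.1) := by
  obtain ⟨p, hp⟩ := exists_walk_length_eq_card_symmDiff hP S T
  simpa [hp] using card_symmDiff_le_length (p.map f)

lemma card_symmDiff_apply_apply (hP : Monotone P) (hQ : Monotone Q)
    (φ : tarGraph P ≃g tarGraph Q) (S T : {S : Finset V // P S}) :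
    #((φ S).1 ∆ (φ T).1) = #(S.1 ∆ T.1) :=
  (card_symmDiff_map_le hP φ.toHom S T).antisymm <| by
    simpa using card_symmDiff_map_le hQ φ.symm.toHom (φ S) (φ T)

lemma exists_isPerfectMatching_of_forall_symmDiff_singleton (r : V)
    (h : ∀ S, P S → P (S ∆ {r})) : ∃ M : (tarGraph P).Subgraph, M.IsPerfectMatching :=
  SimpleGraph.exists_isPerfectMatching_of_involutive (f := fun S => ⟨S.1 ∆ {r}, h S.1 S.2⟩)
    (fun S => Subtype.ext (symmDiff_symmDiff_cancel_right _ _))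
    (fun S => by simp [adj_iff, symmDiff_symmDiff_cancel_left])

section Automorphism

variable [Fintype V]

lemma exists_perm_apply_compl_singleton (hP : Monotone P) (huniv : P univ) (hco : ∀ v, P {v}ᶜ)
    (φ : tarGraph P ≃g tarGraph P) :
    ∃ g : Equiv.Perm V, ∀ v, (φ ⟨{v}ᶜ, hco v⟩).1 = (φ ⟨univ, huniv⟩).1 ∆ {g v} := by
  have hcard (v : V) : #((φ ⟨univ, huniv⟩).1 ∆ (φ ⟨{v}ᶜ, hco v⟩).1) = 1 := by
    rw [card_symmDiff_apply_apply hP hP]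
    simp [← top_eq_univ, top_symmDiff]
  choose g hg using fun v => card_eq_one.mp (hcard v)
  have hφg (v : V) : (φ ⟨{v}ᶜ, hco v⟩).1 = (φ ⟨univ, huniv⟩).1 ∆ {g v} := by
    rw [← hg, symmDiff_symmDiff_cancel_left]
  have hg_inj : Injective g := fun v w hvw => by
    have h := φ.injective (Subtype.ext ((hφg v).trans (hvw ▸ (hφg w).symm)))
    simpa using congrArg Subtype.val h
  exact ⟨Equiv.ofBijective g hg_inj.bijective_of_finite, hφg⟩

lemma exists_perm_symmDiff_apply_univ_eq_map_compl (hP : Monotone P) (huniv : P univ)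
    (hco : ∀ v, P {v}ᶜ) (φ : tarGraph P ≃g tarGraph P) :
    ∃ g : Equiv.Perm V, ∀ S : {S : Finset V // P S},
      (φ S).1 ∆ (φ ⟨univ, huniv⟩).1 = S.1ᶜ.map g.toEmbedding := by
  obtain ⟨g, hg⟩ := exists_perm_apply_compl_singleton hP huniv hco φ
  refine ⟨g, fun S => ext fun x => ?_⟩
  obtain ⟨v, rfl⟩ := g.surjective x
  rw [mem_map_equiv, Equiv.symm_apply_apply]
  refine mem_iff_mem_of_card_symmDiff_singleton_eq ?_ ?_
  · rw [card_symmDiff_apply_apply hP hP]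
    simp [← top_eq_univ, symmDiff_top]
  · rw [symmDiff_assoc, ← hg, card_symmDiff_apply_apply hP hP, ← compl_symmDiff_compl,
      compl_compl]

lemma apply_univ_inter_mem (hP : Monotone P) (huniv : P univ) (hco : ∀ v, P {v}ᶜ)
    (φ : tarGraph P ≃g tarGraph P) {T : Finset V} (hT : P T) :
    P ((φ ⟨univ, huniv⟩).1 ∩ T) := by
  set U := (φ ⟨univ, huniv⟩).1
  obtain ⟨g, hg⟩ := exists_perm_symmDiff_apply_univ_eq_map_compl hP huniv hco φ
  set S := φ.symm ⟨T, hT⟩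
  have hS : T ∆ U = S.1ᶜ.map g.toEmbedding := by simpa [S] using hg S
  -- `φ` sends the complement of the preimage of `U \ T` under `g` to `U ∩ T`.
  set X := (U \ T).map g.symm.toEmbedding
  have hSX : S.1 ⊆ Xᶜ := subset_compl_comm.mpr <|
    calc X ⊆ (T ∆ U).map g.symm.toEmbedding := map_subset_map.mpr symmDiff_subset_sdiff'
      _ = S.1ᶜ := by simp [hS, map_map]
  have hmem := (φ ⟨Xᶜ, hP hSX S.2⟩).2
  have h : (φ ⟨Xᶜ, hP hSX S.2⟩).1 ∆ U = U \ T := by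
    rw [hg, compl_compl]
    simp [X, map_map]
  rwa [← symmDiff_symmDiff_cancel_right U (φ _).1, h, symmDiff_of_le sdiff_le,
    sdiff_sdiff_self_left] at hmem

end Automorphism

end tarGraph

theorem perfect_matching_of_automorphism_moving_univ_general {V : Type*}
    [Fintype V] [DecidableEq V] [Nonempty V]
    (P : Finset V → Prop)
    (hP1 : ∀ S T : Finset V, P S → S ⊆ T → P T)
    (hP3 : ∀ v : V, P (Finset.univ \ {v}))
    (φ : tarGraph P ≃g tarGraph P)
    (hφ : (φ ⟨Finset.univ,
        hP1 _ _ (hP3 (Classical.arbitrary V)) (Finset.subset_univ _)⟩).1 ≠ Finset.univ) :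
    ∃ M : (tarGraph P).Subgraph, M.IsPerfectMatching := by
  have hP : Monotone P := fun S T hST hS => hP1 S T hS hST
  have huniv : P univ := hP (subset_univ _) (hP3 (Classical.arbitrary V))
  have hco (v : V) : P {v}ᶜ := compl_eq_univ_sdiff {v} ▸ hP3 v
  obtain ⟨r, hr⟩ : ∃ r, r ∉ (φ ⟨univ, huniv⟩).1 := not_forall.mp (mt eq_univ_of_forall hφ)
  exact tarGraph.exists_isPerfectMatching_of_forall_symmDiff_singleton r fun S hS =>
    hP (inter_subset_symmDiff_singleton hr) (tarGraph.apply_univ_inter_mem hP huniv hco φ hS)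

/-- Let `P` be an X-set property on finite subsets of a nonempty finite type `V`.
If some graph automorphism of the `P`-TAR graph does not fix the vertex given by the
full set `V`, then the `P`-TAR graph has a perfect matching. -/
theorem perfect_matching_of_automorphism_moving_univ {V : Type*}
    [Fintype V] [DecidableEq V] [Nonempty V]
    (P : Finset V → Prop)
    (hP1 : ∀ S T : Finset V, P S → S ⊆ T → P T)
    (hP2 : ¬ P ∅)
    (hP3 : ∀ v : V, P (Finset.univ \ {v}))
    (φ : tarGraph P ≃g tarGraph P)
    (hφ : (φ ⟨Finset.univ,
        hP1 _ _ (hP3 (Classical.arbitrary V)) (Finset.subset_univ _)⟩).1 ≠ Finset.univ) :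
    ∃ M : (tarGraph P).Subgraph, M.IsPerfectMatching :=
  perfect_matching_of_automorphism_moving_univ_general P hP1 hP3 φ hφ
end

section
/- Let G be a connected simple graph on n ≥ 2 vertices. If the zero forcing TAR graph of G is isomorphic to the star K_{1,n}, then G is isomorphic to the complete graph K_n. -/
/-- A set `B` is forcing-closed in `G` if no vertex of `B` has exactly one neighbor
outside `B` (i.e. no force can be performed from `B`). The zero forcing closure of `S`
is the smallest forcing-closed set containing `S`. -/
def ZFClosed {V : Type*} (G : SimpleGraph V) (B : Finset V) : Prop :=
  ∀ v ∈ B, ¬ ∃! w : V, G.Adj v w ∧ w ∉ B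

/-- `S` is a zero forcing set of `G`: the zero forcing closure of `S` is all of `V`,
equivalently every forcing-closed set containing `S` is all of `V`. -/
def IsZeroForcingSet {V : Type*} [Fintype V] (G : SimpleGraph V) (S : Finset V) : Prop :=
  ∀ B : Finset V, S ⊆ B → ZFClosed G B → B = Finset.univ

namespace SimpleGraph

variable {V : Type*} {G : SimpleGraph V}

lemma Walk.adj_of_ne_of_forall_adj
    (hG : ∀ a z b, G.Adj a z → G.Adj z b → a ≠ b → G.Adj a b) {u v : V} (w : G.Walk u v) (huv : u ≠ v) : G.Adj u v := by
  induction w with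
  | nil => exact absurd rfl huv
  | @cons u x v hux w ih =>
    by_cases hxv : x = v
    · exact hxv ▸ hux
    · exact hG u x v hux (ih hxv) huv

lemma Preconnected.exists_adj_adj_not_adj (hconn : G.Preconnected) (hG : G ≠ ⊤) :
    ∃ a z b, G.Adj a z ∧ G.Adj z b ∧ a ≠ b ∧ ¬ G.Adj a b := by
  obtain ⟨u, v, huv, hnadj⟩ := ne_top_iff_exists_not_adj.mp hG
  by_contra! hG
  exact hnadj ((hconn u v).some.adj_of_ne_of_forall_adj hG huv)

lemma completeBipartiteGraph_eq_or_eq_of_adj {α β : Type*} [Subsingleton α] {u v p q : α ⊕ β}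
    (hup : (completeBipartiteGraph α β).Adj u p) (huq : (completeBipartiteGraph α β).Adj u q)
    (hvp : (completeBipartiteGraph α β).Adj v p) (hvq : (completeBipartiteGraph α β).Adj v q) :
    u = v ∨ p = q := by
  rcases u with u | u <;> rcases v with v | v <;> rcases p with p | p <;> rcases q with q | q <;>
    simp_all [completeBipartiteGraph]
  exacts [.inl (Subsingleton.elim u v), .inr (Subsingleton.elim p q)]

end SimpleGraph

section TAR

variable {V : Type*} [DecidableEq V] {P : Finset V → Prop}

lemma tarGraph_adj_of_insert_eq {S T : {S : Finset V // P S}} {x : V} (hx : x ∉ S.1)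
    (hST : T.1 = insert x S.1) : (tarGraph P).Adj S T := by
  show (symmDiff S.1 T.1).card = 1
  rw [hST, Finset.card_eq_one]
  exact ⟨x, by ext y; by_cases hy : y = x <;> simp_all [Finset.mem_symmDiff]⟩

lemma isEmpty_tarGraph_iso_completeBipartiteGraph (hP : Monotone P) {S : Finset V} {x y : V}
    (hS : P S) (hx : x ∉ S) (hy : y ∉ S) (hxy : x ≠ y) (α β : Type*) [Subsingleton α] :
    IsEmpty (tarGraph P ≃g completeBipartiteGraph α β) := by
  refine ⟨fun e => ?_⟩
  let s : {S // P S} := ⟨S, hS⟩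
  let sx : {S // P S} := ⟨insert x S, hP (Finset.subset_insert x S) hS⟩
  let sy : {S // P S} := ⟨insert y S, hP (Finset.subset_insert y S) hS⟩
  let sxy : {S // P S} := ⟨insert x (insert y S), hP (Finset.subset_insert x _) sy.2⟩
  have hy_sx : y ∉ insert x S := by simp [hy, hxy.symm]
  have hx_sy : x ∉ insert y S := by simp [hx, hxy]
  have adj {T U} (h : (tarGraph P).Adj T U) : (completeBipartiteGraph α β).Adj (e T) (e U) :=
    e.map_adj_iff.mpr h
  rcases SimpleGraph.completeBipartiteGraph_eq_or_eq_of_adj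
      (adj (tarGraph_adj_of_insert_eq (S := s) (T := sx) hx rfl))
      (adj (tarGraph_adj_of_insert_eq (S := s) (T := sy) hy rfl))
      (adj (tarGraph_adj_of_insert_eq (S := sx) (T := sxy) hy_sx (Finset.insert_comm x y S)).symm)
      (adj (tarGraph_adj_of_insert_eq (S := sy) (T := sxy) hx_sy rfl).symm) with h | h
  · have h : S = insert x (insert y S) := congrArg Subtype.val (e.injective h)
    exact hx (h ▸ Finset.mem_insert_self x _)
  · have h : insert x S = insert y S := congrArg Subtype.val (e.injective h)
    exact hx_sy (h ▸ Finset.mem_insert_self x S)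

end TAR

section ZeroForcing

variable {V : Type*} {G : SimpleGraph V}

lemma ZFClosed.mem_of_adj {B : Finset V} (hB : ZFClosed G B) {v w : V} (hv : v ∈ B)
    (hvw : G.Adj v w) (honly : ∀ u, G.Adj v u → u ∉ B → u = w) : w ∈ B := by
  by_contra hw
  exact hB v hv ⟨w, ⟨hvw, hw⟩, fun u hu => honly u hu.1 hu.2⟩

variable [Fintype V]

lemma monotone_isZeroForcingSet : Monotone (IsZeroForcingSet G) :=
  fun _ _ hST hS B hTB hB => hS B (hST.trans hTB) hB

lemma isZeroForcingSet_sdiff_pair [DecidableEq V] {a z b : V} (haz : G.Adj a z)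
    (hzb : G.Adj z b) (hab : a ≠ b) (hnab : ¬ G.Adj a b) :
    IsZeroForcingSet G (Finset.univ \ {z, b}) := by
  intro B hSB hB
  have hout : ∀ x ∉ B, x = z ∨ x = b := fun x hx => by
    by_contra! hc
    exact hx (hSB (by simp [hc.1, hc.2]))
  have hzB : z ∈ B := hB.mem_of_adj (hSB (by simp [haz.ne, hab])) haz fun u hau hu =>
    (hout u hu).resolve_right (by rintro rfl; exact hnab hau)
  have hbB : b ∈ B := hB.mem_of_adj hzB hzb fun u hzu hu =>
    (hout u hu).resolve_left (by rintro rfl; exact G.irrefl hzu)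
  exact Finset.eq_univ_of_forall fun x => by
    by_contra hx
    rcases hout x hx with rfl | rfl <;> contradiction

end ZeroForcing

theorem complete_of_zTar_iso_star_general {W : Type*} [Fintype W] [DecidableEq W]
    (G : SimpleGraph W) (n : ℕ) (hcard : Fintype.card W = n)
    (hconn : G.Connected)
    (h : Nonempty
      (tarGraph (IsZeroForcingSet G) ≃g completeBipartiteGraph (Fin 1) (Fin n))) :
    Nonempty (G ≃g (⊤ : SimpleGraph (Fin n))) := by
  obtain ⟨e⟩ := h
  have hG : G = ⊤ := by
    by_contra hG
    obtain ⟨a, z, b, haz, hzb, hab, hnab⟩ := hconn.preconnected.exists_adj_adj_not_adj hG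
    exact (isEmpty_tarGraph_iso_completeBipartiteGraph monotone_isZeroForcingSet
      (isZeroForcingSet_sdiff_pair haz hzb hab hnab) (by simp) (by simp) hzb.ne _ _).false e
  subst hG
  exact ⟨SimpleGraph.Iso.completeGraph (Fintype.equivFinOfCardEq hcard)⟩

/-- If `G` is a connected graph on `n ≥ 2` vertices whose zero forcing TAR graph is
isomorphic to the star `K_{1,n}`, then `G` is isomorphic to the complete graph `K_n`. -/
theorem complete_of_zTar_iso_star {W : Type*} [Fintype W] [DecidableEq W]
    (G : SimpleGraph W) (n : ℕ) (hn : 2 ≤ n) (hcard : Fintype.card W = n)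
    (hconn : G.Connected)
    (h : Nonempty
      (tarGraph (IsZeroForcingSet G) ≃g completeBipartiteGraph (Fin 1) (Fin n))) :
    Nonempty (G ≃g (⊤ : SimpleGraph (Fin n))) :=
  complete_of_zTar_iso_star_general G n hcard hconn h
end
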